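/- Suppose every transition of a UTA A has a guard containing, for every clock x ∈ X, an upper-bound atomic constraint x ◁ c. Then the smallest reduced G-map of A is finite, i.e., assigns a finite set of atomic constraints to every state. -/

import Mathlib

open Classical

/-- Comparison operator `◁ ∈ {<, ≤}`. -/
inductive Ineq where
  | lt
  | le

def Ineq.holds : Ineq → ℝ → ℝ → Prop
  | .lt, a, b => a < b
  | .le, a, b => a ≤ b

/-- Atomic constraints over a set `X` of clocks. -/
inductive AC (X : Type) where
  | tt
  | ff
  | upper (x : X) (o : Ineq) (c : ℕ)              -- x ◁ c
  | lower (c : ℕ) (o : Ineq) (x : X)              -- c ◁ x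
  | dUpper (x y : X) (o : Ineq) (c : ℕ)           -- x - y ◁ c
  | dLower (c : ℕ) (o : Ineq) (x y : X)           -- c ◁ x - y

/-- A valuation maps clocks to nonnegative reals. -/
abbrev Val (X : Type) := X → NNReal

def AC.sat {X : Type} (v : Val X) : AC X → Prop
  | .tt => True
  | .ff => False
  | .upper x o c => o.holds (v x : ℝ) (c : ℝ)
  | .lower c o x => o.holds (c : ℝ) (v x : ℝ)
  | .dUpper x y o c => o.holds ((v x : ℝ) - (v y : ℝ)) (c : ℝ)
  | .dLower c o x y => o.holds (c : ℝ) ((v x : ℝ) - (v y : ℝ))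

/-- A constraint (guard) is a finite conjunction of atomic constraints. -/
abbrev Guard (X : Type) := List (AC X)

def satG {X : Type} (v : Val X) (g : Guard X) : Prop := ∀ φ ∈ g, AC.sat v φ

/-- The valuation `v + δ`. -/
def delay {X : Type} (v : Val X) (δ : NNReal) : Val X := fun x => v x + δ

/-- `v ⊑_G v'` for a set `G` of atomic constraints. -/
def simS {X : Type} (G : Set (AC X)) (v v' : Val X) : Prop :=
  ∀ δ : NNReal, ∀ φ ∈ G, AC.sat (delay v δ) φ → AC.sat (delay v' δ) φ

/-- `v ⊑_φ v'` for a single constraint `φ` (a conjunction of atomic constraints). -/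
def simC {X : Type} (g : Guard X) (v v' : Val X) : Prop :=
  ∀ δ : NNReal, satG (delay v δ) g → satG (delay v' δ) g

/-- Right-hand side of an atomic update: `x := c` or `x := y + d`. -/
inductive Rhs (X : Type) where
  | const (c : ℕ)
  | clock (y : X) (d : ℤ)

/-- An update assigns a right-hand side to every clock. -/
abbrev Update (X : Type) := X → Rhs X

def Rhs.eval {X : Type} (v : Val X) : Rhs X → ℝ
  | .const c => (c : ℝ)
  | .clock y d => (v y : ℝ) + (d : ℝ)

/-- `up(v) ≥ 0`. -/
def Update.nonneg {X : Type} (up : Update X) (v : Val X) : Prop :=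
  ∀ x, 0 ≤ Rhs.eval v (up x)

/-- The valuation `up(v)` (meaningful when `up.nonneg v`). -/
noncomputable def Update.app {X : Type} (up : Update X) (v : Val X) : Val X :=
  fun x => Real.toNNReal (Rhs.eval v (up x))

/-- `up⁻¹(φ)` for an atomic constraint `φ`: simultaneous substitution of `up_x` for `x`
rewritten to an equivalent atomic constraint (possibly ⊤ or ⊥). -/
noncomputable def upInvA {X : Type} (up : Update X) : AC X → AC X
  | .tt => .tt
  | .ff => .ff
  | .upper x o c =>
      match up x with
      | .const a => if o.holds (a : ℝ) (c : ℝ) then .tt else .ff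
      | .clock y d => if (c : ℤ) - d < 0 then .ff else .upper y o ((c : ℤ) - d).toNat
  | .lower c o x =>
      match up x with
      | .const a => if o.holds (c : ℝ) (a : ℝ) then .tt else .ff
      | .clock y d => if (c : ℤ) - d < 0 then .tt else .lower ((c : ℤ) - d).toNat o y
  | .dUpper x y o c =>
      match up x, up y with
      | .const a, .const b => if o.holds ((a : ℝ) - (b : ℝ)) (c : ℝ) then .tt else .ff
      | .const a, .clock z e =>
          if (a : ℤ) - e - (c : ℤ) < 0 then .tt
          else .lower ((a : ℤ) - e - (c : ℤ)).toNat o z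
      | .clock z e, .const b =>
          if (c : ℤ) + (b : ℤ) - e < 0 then .ff
          else .upper z o ((c : ℤ) + (b : ℤ) - e).toNat
      | .clock z e, .clock w f =>
          if (c : ℤ) - e + f < 0 then .dLower (-((c : ℤ) - e + f)).toNat o w z
          else .dUpper z w o ((c : ℤ) - e + f).toNat
  | .dLower c o x y =>
      match up x, up y with
      | .const a, .const b => if o.holds (c : ℝ) ((a : ℝ) - (b : ℝ)) then .tt else .ff
      | .const a, .clock z e =>
          if (a : ℤ) - e - (c : ℤ) < 0 then .ff
          else .upper z o ((a : ℤ) - e - (c : ℤ)).toNat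
      | .clock z e, .const b =>
          if (c : ℤ) + (b : ℤ) - e < 0 then .tt
          else .lower ((c : ℤ) + (b : ℤ) - e).toNat o z
      | .clock z e, .clock w f =>
          if (c : ℤ) - e + f < 0 then .dUpper w z o (-((c : ℤ) - e + f)).toNat
          else .dLower ((c : ℤ) - e + f).toNat o z w

/-- `up⁻¹` of a conjunction of atomic constraints. -/
noncomputable def upInvC {X : Type} (up : Update X) (g : Guard X) : Guard X :=
  g.map (upInvA up)

/-- The guard `g` contains an upper-bound constraint `x ◁₁ c` on clock `x`. -/
def hasUpperG {X : Type} (g : Guard X) (x : X) : Prop := ∃ o c, AC.upper x o c ∈ g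

/-- The smallest constant of an upper-bound constraint on `x` in `g`. -/
noncomputable def minUpperG {X : Type} (g : Guard X) (x : X) : ℕ :=
  sInf {c | ∃ o, AC.upper x o c ∈ g}

/-- Condition of Case 3 of the table defining `wp`. -/
def case3G {X : Type} (g : Guard X) (x y : X) (d : ℕ) : Prop :=
  (∃ o c, AC.upper x o c ∈ g ∧ c < d) ∨
  (∃ o c, AC.dUpper x y o c ∈ g ∧ c < d) ∨
  (∃ o e, AC.dLower e o x y ∈ g ∧ d < e)

/-- The pre `wp(φ, g, up)` of an atomic constraint under a guard-update pair. -/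
noncomputable def wp {X : Type} (φ : AC X) (g : Guard X) (up : Update X) : AC X :=
  match upInvA up φ with
  | .upper x o d => if hasUpperG g x then .tt else .upper x o d
  | .lower d o x =>
      if hasUpperG g x ∧ minUpperG g x < d then .lower (minUpperG g x) .le x
      else .lower d o x
  | .dUpper x y o d => if case3G g x y d then .tt else .dUpper x y o d
  | .dLower d o x y => if case3G g x y d then .tt else .dLower d o x y
  | ψ => ψ

/-- A transition of an updatable timed automaton. -/
structure UTrans (Q X : Type) where
  src : Q
  guard : Guard X
  update : Update X
  tgt : Q

/-- An updatable timed automaton (UTA). -/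
structure UTA (Q X : Type) where
  init : Q
  trans : List (UTrans Q X)
  acc : Set Q

/-- (Non-reduced) G-map. -/
def IsGMap {Q X : Type} (A : UTA Q X) (G : Q → Set (AC X)) : Prop :=
  ∀ t ∈ A.trans,
    (∀ φ ∈ t.guard, φ ∈ G t.src) ∧
    (∀ x : X, upInvA t.update (AC.lower 0 .le x) ∈ G t.src) ∧
    (∀ φ ∈ G t.tgt, upInvA t.update φ ∈ G t.src)

/-- Reduced G-map. -/
def IsRedGMap {Q X : Type} (A : UTA Q X) (G : Q → Set (AC X)) : Prop :=
  ∀ t ∈ A.trans,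
    (∀ φ ∈ t.guard, φ ∈ G t.src) ∧
    (∀ x : X, wp (AC.lower 0 .le x) t.guard t.update ∈ G t.src) ∧
    (∀ φ ∈ G t.tgt, wp φ t.guard t.update ∈ G t.src)

/-- Pointwise intersection of all G-maps: the smallest G-map. -/
def minGMap {Q X : Type} (A : UTA Q X) : Q → Set (AC X) :=
  fun q => ⋂ G ∈ {G | IsGMap A G}, G q

/-- Pointwise intersection of all reduced G-maps: the smallest reduced G-map. -/
def minRedGMap {Q X : Type} (A : UTA Q X) : Q → Set (AC X) :=
  fun q => ⋂ G ∈ {G | IsRedGMap A G}, G q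

/-- Action transition `(q, v) →t (q', up(v))` of the UTA semantics. -/
def actionStep {Q X : Type} (A : UTA Q X) (t : UTrans Q X) (c c' : Q × Val X) : Prop :=
  t ∈ A.trans ∧ c.1 = t.src ∧ c'.1 = t.tgt ∧ satG c.2 t.guard ∧
  t.update.nonneg c.2 ∧ c'.2 = t.update.app c.2

/-- A simulation on the UTA semantics: a preorder relating only configurations with
the same state, preserved by delays and actions. -/
def IsSimulation {Q X : Type} (A : UTA Q X)
    (R : (Q × Val X) → (Q × Val X) → Prop) : Prop :=
  (∀ p, R p p) ∧
  (∀ p₁ p₂ p₃, R p₁ p₂ → R p₂ p₃ → R p₁ p₃) ∧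
  (∀ p p', R p p' → p.1 = p'.1) ∧
  (∀ q (v v' : Val X) (δ : NNReal), R (q, v) (q, v') → R (q, delay v δ) (q, delay v' δ)) ∧
  (∀ q (v v' : Val X) t p₁, R (q, v) (q, v') → actionStep A t (q, v) p₁ →
      ∃ v₁', actionStep A t (q, v') (p₁.1, v₁') ∧ R p₁ (p₁.1, v₁'))

/-- A run of a UTA: alternating delays and actions from the initial configuration. -/
def IsRun {Q X : Type} (A : UTA Q X) (n : ℕ) (qs : ℕ → Q) (ds : ℕ → NNReal)
    (vs : ℕ → Val X) : Prop :=
  qs 0 = A.init ∧ (∀ x, vs 0 x = 0) ∧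
  ∀ i, i < n → ∃ t, actionStep A t (qs i, delay (vs i) (ds i)) (qs (i + 1), vs (i + 1))

/-- Configurations occurring on some run of the UTA. -/
def ReachCfg {Q X : Type} (A : UTA Q X) (p : Q × Val X) : Prop :=
  ∃ n qs ds vs, IsRun A n qs ds vs ∧ ∃ δ : NNReal, p.1 = qs n ∧ p.2 = delay (vs n) δ

/-- Timed automaton with subtraction: every atomic update is `x := 0` or `x := x - c`. -/
def IsSubtractionTA {Q X : Type} (A : UTA Q X) : Prop :=
  ∀ t ∈ A.trans, ∀ x : X,
    t.update x = Rhs.const 0 ∨ ∃ c : ℕ, t.update x = Rhs.clock x (-(c : ℤ))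

/-- Timed automaton with bounded subtraction with bounds `M`. -/
def IsBoundedSub {Q X : Type} (A : UTA Q X) (M : X → ℕ) : Prop :=
  IsSubtractionTA A ∧
  ∀ q v, ReachCfg A (q, v) → ∀ t ∈ A.trans, t.src = q → satG v t.guard →
    ∀ (x : X) (c : ℕ), 0 < c → t.update x = Rhs.clock x (-(c : ℤ)) → (v x : ℝ) ≤ (M x : ℝ)

/-- Timed automaton with syntactically bounded subtraction. -/
def IsSynBoundedSub {Q X : Type} (A : UTA Q X) : Prop :=
  IsSubtractionTA A ∧
  ∀ t ∈ A.trans, ∀ (x : X) (c : ℕ), 0 < c → t.update x = Rhs.clock x (-(c : ℤ)) →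
    ∃ o c', AC.upper x o c' ∈ t.guard

/-- The constant of an atomic constraint. -/
def AC.cst {X : Type} : AC X → ℕ
  | .tt => 0
  | .ff => 0
  | .upper _ _ c => c
  | .lower c _ _ => c
  | .dUpper _ _ _ c => c
  | .dLower c _ _ _ => c

/-- The constant occurring in the right-hand side of an atomic update. -/
def Rhs.cst {X : Type} : Rhs X → ℕ
  | .const c => c
  | .clock _ d => d.natAbs

/-- Maximum constant occurring in the guards of a UTA. -/
def maxGuardConst {Q X : Type} (A : UTA Q X) : ℕ :=
  (A.trans.map fun t => (t.guard.map AC.cst).foldr max 0).foldr max 0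

/-- Maximum absolute value of a constant occurring in the updates of a UTA. -/
noncomputable def maxUpdateConst {Q X : Type} [Fintype X] (A : UTA Q X) : ℕ :=
  (A.trans.map fun t => Finset.univ.sup fun x => Rhs.cst (t.update x)).foldr max 0

/-- `L(G)(x)`: maximum constant of a lower-bound constraint on `x` in `G` (⊥ = −∞ if none). -/
noncomputable def Lb {X : Type} (G : Set (AC X)) (x : X) : WithBot ℕ∞ :=
  ⨆ c ∈ {c : ℕ | ∃ o, AC.lower c o x ∈ G}, ((c : ℕ∞) : WithBot ℕ∞)

/-- `U(G)(x)`: maximum constant of an upper-bound constraint on `x` in `G` (⊥ = −∞ if none). -/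
noncomputable def Ub {X : Type} (G : Set (AC X)) (x : X) : WithBot ℕ∞ :=
  ⨆ c ∈ {c : ℕ | ∃ o, AC.upper x o c ∈ G}, ((c : ℕ∞) : WithBot ℕ∞)

def AC.isDiag {X : Type} : AC X → Prop
  | .dUpper _ _ _ _ => True
  | .dLower _ _ _ _ => True
  | _ => False

/-- `G^d`: the diagonal constraints of `G`. -/
def diagOf {X : Type} (G : Set (AC X)) : Set (AC X) := {φ ∈ G | φ.isDiag}

def AC.isWeak {X : Type} : AC X → Prop
  | .upper _ o _ => o = .le
  | .lower _ o _ => o = .le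
  | .dUpper _ _ o _ => o = .le
  | .dLower _ o _ _ => o = .le
  | _ => True

/-- All atomic constraints in guards of `A` use the weak inequality `≤`. -/
def weakGuards {Q X : Type} (A : UTA Q X) : Prop :=
  ∀ t ∈ A.trans, ∀ φ ∈ t.guard, φ.isWeak

/-- A context: an atomic constraint with a hole for the constant. -/
inductive Ctx (X : Type) where
  | upper (x : X)      -- x ≤ ·
  | lower (x : X)      -- · ≤ x
  | dUpper (x y : X)   -- x - y ≤ ·
  | dLower (x y : X)   -- · ≤ x - y

def Ctx.fill {X : Type} : Ctx X → ℕ → AC X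
  | .upper x, c => .upper x .le c
  | .lower x, c => .lower c .le x
  | .dUpper x y, c => .dUpper x y .le c
  | .dLower x y, c => .dLower c .le x y

/-- Propagation sequence `(q_i, ctx_i[c_i]) → ⋯ → (q_j, ctx_j[c_j])`. -/
def PropSeq {Q X : Type} (A : UTA Q X) (i j : ℕ) (qs : ℕ → Q) (ctxs : ℕ → Ctx X)
    (cs : ℕ → ℕ) : Prop :=
  ∀ k, i ≤ k → k < j → ∃ t ∈ A.trans, t.src = qs (k + 1) ∧ t.tgt = qs k ∧
    (ctxs (k + 1)).fill (cs (k + 1)) = wp ((ctxs k).fill (cs k)) t.guard t.update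

/-!
Every constant produced by `wp φ g up` is bounded by a constant of `g`: Case 1 and Case 3 erase an
atomic constraint whose constant exceeds the least upper bound `g` puts on its clock, Case 2 lowers
it to that bound, and otherwise the constant already lies below that bound. Hence when every guard
bounds every clock, the constant map `q ↦ {φ | φ.cst ≤ maxGuardConst A}` is a reduced G-map, and
it is finite because there are finitely many clocks.
-/

instance : Finite Ineq :=
  Finite.of_surjective (fun b : Bool => cond b .lt .le) (by
    rintro (_ | _)
    exacts [⟨true, rfl⟩, ⟨false, rfl⟩])

def AC.ofBounded {X : Type} (N : ℕ) :
    Bool ⊕ (X × Ineq × Fin (N + 1)) ⊕ (X × Ineq × Fin (N + 1)) ⊕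
      (X × X × Ineq × Fin (N + 1)) ⊕ (X × X × Ineq × Fin (N + 1)) → AC X
  | .inl true => .tt
  | .inl false => .ff
  | .inr (.inl (x, o, c)) => .upper x o c
  | .inr (.inr (.inl (x, o, c))) => .lower c o x
  | .inr (.inr (.inr (.inl (x, y, o, c)))) => .dUpper x y o c
  | .inr (.inr (.inr (.inr (x, y, o, c)))) => .dLower c o x y

theorem AC.finite_setOf_cst_le {X : Type} [Finite X] (N : ℕ) :
    {φ : AC X | φ.cst ≤ N}.Finite := by
  refine (Set.finite_range (AC.ofBounded N)).subset fun φ hφ => ?_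
  have hlt : φ.cst < N + 1 := Nat.lt_succ_of_le hφ
  cases φ with
  | tt => exact ⟨.inl true, rfl⟩
  | ff => exact ⟨.inl false, rfl⟩
  | upper x o c => exact ⟨.inr (.inl (x, o, ⟨c, hlt⟩)), rfl⟩
  | lower c o x => exact ⟨.inr (.inr (.inl (x, o, ⟨c, hlt⟩))), rfl⟩
  | dUpper x y o c => exact ⟨.inr (.inr (.inr (.inl (x, y, o, ⟨c, hlt⟩)))), rfl⟩
  | dLower c o x y => exact ⟨.inr (.inr (.inr (.inr (x, y, o, ⟨c, hlt⟩)))), rfl⟩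

theorem AC.cst_le_maxGuardConst {Q X : Type} {A : UTA Q X} {t : UTrans Q X}
    (ht : t ∈ A.trans) {φ : AC X} (hφ : φ ∈ t.guard) : φ.cst ≤ maxGuardConst A :=
  List.le_max_of_le' 0 (List.mem_map_of_mem ht)
    (List.le_max_of_le' 0 (List.mem_map_of_mem hφ) le_rfl)

section Wp

variable {X : Type} {g : Guard X} {x : X}

theorem exists_upper_minUpperG_mem (h : hasUpperG g x) :
    ∃ o, AC.upper x o (minUpperG g x) ∈ g :=
  let ⟨o, c, hc⟩ := h
  Nat.sInf_mem (s := {c | ∃ o, AC.upper x o c ∈ g}) ⟨c, o, hc⟩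

theorem minUpperG_le {N : ℕ} (h : hasUpperG g x) (hN : ∀ ψ ∈ g, ψ.cst ≤ N) :
    minUpperG g x ≤ N :=
  let ⟨_, ho⟩ := exists_upper_minUpperG_mem h
  hN _ ho

theorem le_minUpperG_of_not_case3G {y : X} {d : ℕ} (h : hasUpperG g x)
    (hd : ¬case3G g x y d) : d ≤ minUpperG g x := by
  obtain ⟨o, ho⟩ := exists_upper_minUpperG_mem h
  by_contra! hlt
  exact hd (.inl ⟨o, _, ho, hlt⟩)

theorem cst_wp_le {N : ℕ} (up : Update X) (φ : AC X) (hub : ∀ x, hasUpperG g x)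
    (hN : ∀ ψ ∈ g, ψ.cst ≤ N) : (wp φ g up).cst ≤ N := by
  have hmin x : minUpperG g x ≤ N := minUpperG_le (hub x) hN
  rcases hψ : upInvA up φ with _ | _ | ⟨x, o, d⟩ | ⟨d, o, x⟩ | ⟨x, y, o, d⟩ | ⟨d, o, x, y⟩ <;>
    simp only [wp, hψ, AC.cst, Nat.zero_le]
  · simp [hub]
  · split_ifs with hd
    · exact hmin x
    · exact (not_lt.mp fun hlt => hd ⟨hub x, hlt⟩).trans (hmin x)
  all_goals
    split_ifs with hd
    · exact Nat.zero_le N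
    · exact (le_minUpperG_of_not_case3G (hub x) hd).trans (hmin x)

end Wp

theorem minRedGMap_subset {Q X : Type} {A : UTA Q X} {G : Q → Set (AC X)}
    (hG : IsRedGMap A G) (q : Q) : minRedGMap A q ⊆ G q :=
  fun _ hφ => Set.mem_iInter₂.mp hφ G hG

theorem isRedGMap_setOf_cst_le_maxGuardConst {Q X : Type} {A : UTA Q X}
    (h : ∀ t ∈ A.trans, ∀ x : X, hasUpperG t.guard x) :
    IsRedGMap A fun _ => {φ | φ.cst ≤ maxGuardConst A} := fun t ht =>
  have hN ψ (hψ : ψ ∈ t.guard) := AC.cst_le_maxGuardConst ht hψ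
  ⟨hN, fun _ => cst_wp_le _ _ (h t ht) hN, fun _ _ => cst_wp_le _ _ (h t ht) hN⟩

theorem stmt11_general {Q X : Type} [Fintype X] (A : UTA Q X)
    (h : ∀ t ∈ A.trans, ∀ x : X, ∃ o c, AC.upper x o c ∈ t.guard) :
    ∀ q, (minRedGMap A q).Finite := fun q =>
  (AC.finite_setOf_cst_le _).subset
    (minRedGMap_subset (isRedGMap_setOf_cst_le_maxGuardConst h) q)

/-- Theorem `clock-bounded`. If every transition of a UTA has a
guard containing an upper-bound constraint `x ◁ c` for every clock `x`, then the
smallest reduced G-map is finite at every state. -/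
theorem stmt11 {Q X : Type} [Fintype Q] [Fintype X] (A : UTA Q X)
    (h : ∀ t ∈ A.trans, ∀ x : X, ∃ o c, AC.upper x o c ∈ t.guard) :
    ∀ q, (minRedGMap A q).Finite :=
  stmt11_general A h
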